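/- Let 𝒢 = (G_1, G_2, …) be a sequence of nonsplit communication graphs on n nodes, let W ⊆ [n] be nonempty, let m be a positive integer, and let 0 < t₁ ≤ t₂ satisfy t₂ − t₁ ≥ log₂(|W|/m). Then there exists a set U ⊆ [n] with |U| ≤ m such that U at time t₁ covers W at time t₂. -/
import Mathlib


/-- `prodRange G a k` is the product graph `G_a ∘ G_{a+1} ∘ ⋯ ∘ G_{a+k-1}`;
the empty product (`k = 0`) has exactly the self-loops. -/
def prodRange {n : ℕ} (G : ℕ → Fin n → Fin n → Prop) (a : ℕ) : ℕ → Fin n → Fin n → Prop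
  | 0, i, j => i = j
  | k + 1, i, j => ∃ m, prodRange G a k i m ∧ G (a + k) m j

lemma halve_cover {n : ℕ} (G : ℕ → Fin n → Fin n → Prop)
    (hnonsplit : ∀ t i j, ∃ k, G t k i ∧ G t k j) (t : ℕ) (S : Finset (Fin n)) :
    ∃ S' : Finset (Fin n), S'.card ≤ (S.card + 1) / 2 ∧ ∀ j ∈ S, ∃ i ∈ S', G t i j := by
  induction S using Finset.strongInduction with
  | _ S ih =>
    rcases S.eq_empty_or_nonempty with rfl | ⟨i, hi⟩
    · exact ⟨∅, by simp⟩
    rcases (S.erase i).eq_empty_or_nonempty with he | ⟨j, hj⟩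
    · have hSi : S = {i} := by
        rcases (Finset.erase_eq_empty_iff S i).mp he with h | h
        · exact absurd h (Finset.nonempty_iff_ne_empty.mp ⟨i, hi⟩)
        · exact h
      obtain ⟨k, hk, -⟩ := hnonsplit t i i
      refine ⟨{k}, by simp [hSi], ?_⟩
      intro x hx
      rw [hSi, Finset.mem_singleton] at hx
      exact ⟨k, Finset.mem_singleton_self k, hx ▸ hk⟩
    · obtain ⟨k, hki, hkj⟩ := hnonsplit t i j
      set T := (S.erase i).erase j with hTdef
      have hjS : j ∈ S := Finset.mem_of_mem_erase hj
      have hij : j ≠ i := Finset.ne_of_mem_erase hj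
      have hTsub : T ⊂ S := by
        refine Finset.ssubset_iff_of_subset ?_ |>.mpr ⟨i, hi, ?_⟩
        · exact (Finset.erase_subset _ _).trans (Finset.erase_subset _ _)
        · simp [hTdef]
      obtain ⟨S'', hc, hcov⟩ := ih T hTsub
      have hTcard : T.card = S.card - 2 := by
        rw [hTdef, Finset.card_erase_of_mem hj, Finset.card_erase_of_mem hi]
        omega
      have hScard : 2 ≤ S.card := by
        have := Finset.card_lt_card hTsub
        have h1 : 1 ≤ S.card := Finset.card_pos.mpr ⟨i, hi⟩
        by_contra h
        have : S.card = 1 := by omega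
        have := Finset.card_eq_one.mp this
        obtain ⟨a, ha⟩ := this
        rw [ha, Finset.mem_singleton] at hi hjS
        exact hij (hjS.trans hi.symm)
      refine ⟨insert k S'', ?_, ?_⟩
      · calc (insert k S'').card ≤ S''.card + 1 := Finset.card_insert_le _ _
          _ ≤ (T.card + 1) / 2 + 1 := by omega
          _ ≤ (S.card + 1) / 2 := by omega
      · intro x hx
        by_cases hxi : x = i
        · exact ⟨k, Finset.mem_insert_self _ _, hxi ▸ hki⟩
        by_cases hxj : x = j
        · exact ⟨k, Finset.mem_insert_self _ _, hxj ▸ hkj⟩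
        · obtain ⟨u, hu, hgu⟩ := hcov x (by simp [hTdef, hxi, hxj, hx])
          exact ⟨u, Finset.mem_insert_of_mem hu, hgu⟩

lemma cover_pow {n : ℕ} (G : ℕ → Fin n → Fin n → Prop)
    (hnonsplit : ∀ t i j, ∃ k, G t k i ∧ G t k j) :
    ∀ (k a m : ℕ) (W : Finset (Fin n)), W.card ≤ m * 2 ^ k →
      ∃ U : Finset (Fin n), U.card ≤ m ∧ ∀ j ∈ W, ∃ i ∈ U, prodRange G a k i j := by
  intro k
  induction k with
  | zero =>
    intro a m W hcard
    exact ⟨W, by simpa using hcard, fun j hj => ⟨j, hj, rfl⟩⟩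
  | succ k ih =>
    intro a m W hcard
    obtain ⟨W', hW'card, hW'cov⟩ := halve_cover G hnonsplit (a + k) W
    have h2 : (2:ℕ) ^ (k+1) = 2 * 2 ^ k := by ring
    have hW'le : W'.card ≤ m * 2 ^ k := by
      rw [h2] at hcard
      have he : m * (2 * 2 ^ k) = 2 * (m * 2 ^ k) := by ring
      rw [he] at hcard
      omega
    obtain ⟨U, hUcard, hUcov⟩ := ih a m W' hW'le
    refine ⟨U, hUcard, fun j hj => ?_⟩
    obtain ⟨w, hw, hgw⟩ := hW'cov j hj
    obtain ⟨i, hiU, hpi⟩ := hUcov w hw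
    exact ⟨i, hiU, ⟨w, hpi, hgw⟩⟩

/-- For a sequence of nonsplit communication graphs, a nonempty `W ⊆ [n]`, a positive integer `m`
and times `0 < t₁ ≤ t₂` with `t₂ − t₁ ≥ log₂(|W|/m)`, there is a set `U` of at most `m` nodes
such that `U` at time `t₁` covers `W` at time `t₂`. -/
theorem cover_log_bound (n : ℕ) (G : ℕ → Fin n → Fin n → Prop)
    (hself : ∀ t i, G t i i)
    (hnonsplit : ∀ t i j, ∃ k, G t k i ∧ G t k j)
    (W : Finset (Fin n)) (hW : W.Nonempty) (m : ℕ) (hm : 0 < m)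
    (t₁ t₂ : ℕ) (ht₁ : 0 < t₁) (ht : t₁ ≤ t₂)
    (hlog : Real.logb 2 ((W.card : ℝ) / (m : ℝ)) ≤ ((t₂ - t₁ : ℕ) : ℝ)) :
    ∃ U : Finset (Fin n), U.card ≤ m ∧
      ∀ j ∈ W, ∃ i ∈ U, prodRange G t₁ (t₂ - t₁) i j := by
  set k := t₂ - t₁ with hk
  have hWpos : (0:ℝ) < (W.card : ℝ) / (m : ℝ) := by
    have h1 : (0:ℝ) < (W.card : ℝ) := by exact_mod_cast Finset.card_pos.mpr hW
    have h2 : (0:ℝ) < (m : ℝ) := by exact_mod_cast hm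
    positivity
  have hle : (W.card : ℝ) / (m : ℝ) ≤ (2:ℝ) ^ (k:ℝ) := by
    rw [← Real.rpow_logb (b:=2) (by norm_num) (by norm_num) hWpos]
    exact Real.rpow_le_rpow_of_exponent_le (by norm_num) hlog
  have hle2 : (W.card : ℝ) ≤ (m : ℝ) * 2 ^ k := by
    have h2 : (0:ℝ) < (m : ℝ) := by exact_mod_cast hm
    rw [div_le_iff₀ h2] at hle
    calc (W.card : ℝ) ≤ (2:ℝ) ^ (k:ℝ) * m := hle
      _ = (m : ℝ) * 2 ^ k := by
        rw [Real.rpow_natCast]; ring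
  have hcard : W.card ≤ m * 2 ^ k := by exact_mod_cast hle2
  exact cover_pow G hnonsplit k t₁ m W hcard
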